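/- arXiv:1706.02529 — 5 statements merged into one kernel-verified Lean document; each statement's English description precedes it below -/
import Mathlib

section
/- The algebra G_d, with underlying vector space spanned by symbols x_1,...,x_d and symbols v_{α,β} indexed by pairs (α,β) of d-tuples of nonnegative integers with |α| > 0 and |β| > 0, and multiplication defined by x_i∘x_j = v_{ε_i,ε_j}, x_i∘v_{α,β} = v_{α+ε_i,β}, v_{α,β}∘x_j = v_{α,β+ε_j}, and v_{α,β}∘v_{γ,δ} = v_{α+γ,β+δ}, is a bicommutative algebra. -/
open MvPolynomial

variable (K : Type) [Field K] (ι : Type)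

/-- The ideal of the polynomial ring `K[Y,Z]` (variables `y_i = X (inl i)`,
`z_j = X (inr j)`) generated by the products `y_i * z_j`; its underlying `K`-vector
space is spanned by the monomials `Y^α Z^β` with `|α| > 0` and `|β| > 0`. -/
noncomputable def Vid : Ideal (MvPolynomial (ι ⊕ ι) K) :=
  Ideal.span {p | ∃ i j, p = X (Sum.inl i) * X (Sum.inr j)}

/-- The linear polynomial `∑ a_i y_i`. -/
noncomputable def Yp (a : ι →₀ K) : MvPolynomial (ι ⊕ ι) K :=
  a.sum fun i c => C c * X (Sum.inl i)

/-- The linear polynomial `∑ b_j z_j`. -/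
noncomputable def Zp (b : ι →₀ K) : MvPolynomial (ι ⊕ ι) K :=
  b.sum fun j c => C c * X (Sum.inr j)

/-- The model `G` of the free bicommutative algebra with generators `x_i` indexed
by `ι`: its elements are pairs (linear part in the `x_i`'s, element of the span of
the `v_{α,β} = Y^α Z^β`). -/
abbrev GA : Type := (ι →₀ K) × (Vid K ι)

lemma mul_mem_Vid (a b : ι →₀ K) (p q : MvPolynomial (ι ⊕ ι) K)
    (hp : p ∈ Vid K ι) (hq : q ∈ Vid K ι) :
    (Yp K ι a + p) * (Zp K ι b + q) ∈ Vid K ι := by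
  have hYZ : Yp K ι a * Zp K ι b ∈ Vid K ι := by
    rw [Yp, Zp, Finsupp.sum, Finsupp.sum, Finset.sum_mul_sum]
    refine Submodule.sum_mem _ fun i _ => Submodule.sum_mem _ fun j _ => ?_
    have h : (C (a i) * X (Sum.inl i)) * (C (b j) * X (Sum.inr j))
        = (C (a i) * C (b j)) * (X (Sum.inl i) * X (Sum.inr j) :
          MvPolynomial (ι ⊕ ι) K) := by ring
    rw [h]
    exact Ideal.mul_mem_left _ _ (Ideal.subset_span ⟨i, j, rfl⟩)
  have e : (Yp K ι a + p) * (Zp K ι b + q)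
      = Yp K ι a * Zp K ι b + (Yp K ι a * q + (p * Zp K ι b + p * q)) := by ring
  rw [e]
  exact add_mem hYZ (add_mem (Ideal.mul_mem_left _ _ hq)
    (add_mem (Ideal.mul_mem_right _ _ hp) (Ideal.mul_mem_left _ _ hq)))

/-- The multiplication of `G`: `x_i ∘ x_j = y_i z_j`, `x_i ∘ v_{α,β} = v_{α+ε_i,β}`,
`v_{α,β} ∘ x_j = v_{α,β+ε_j}`, `v_{α,β} ∘ v_{γ,δ} = v_{α+γ,β+δ}`, extended bilinearly. -/
noncomputable instance : Mul (GA K ι) :=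
  ⟨fun u v => (0, ⟨(Yp K ι u.1 + (u.2 : MvPolynomial (ι ⊕ ι) K)) *
      (Zp K ι v.1 + (v.2 : MvPolynomial (ι ⊕ ι) K)),
    mul_mem_Vid K ι u.1 v.1 _ _ u.2.2 v.2.2⟩)⟩

/-- The generator `x_i` of `G`. -/
noncomputable def xE (i : ι) : GA K ι := (Finsupp.single i 1, 0)

/-- The basis element `v_{α,β}` of `G²`, as a predicate on elements of `G`. -/
def IsVElem (w : GA K ι) (α β : ι →₀ ℕ) : Prop :=
  w.1 = 0 ∧ (w.2 : MvPolynomial (ι ⊕ ι) K) = monomial (Finsupp.sumElim α β) 1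

/-- The square `G²` of `G`: the linear span of all products. -/
noncomputable def Gsq : Submodule K (GA K ι) := Submodule.span K {w | ∃ u v : GA K ι, w = u * v}

/-- Two-sided ideals of the (nonassociative) algebra `G`: `K`-subspaces absorbing
multiplication on both sides. -/
def IsTwoSidedIdeal (I : Submodule K (GA K ι)) : Prop :=
  ∀ (a : GA K ι), ∀ x ∈ I, a * x ∈ I ∧ x * a ∈ I

/-! An element `u = (a, p)` of `G` enters a product on the left only through the polynomial
`Yp a + p` and on the right only through `Zp a + p`. A product has zero linear part, so both
polynomials of `u * v` equal `(Yp a + p) * (Zp b + q)`. Hence both bicommutativity identities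
reduce to commutativity and associativity in `K[Y,Z]`. -/

section

variable {K ι}

lemma Yp_zero : Yp K ι 0 = 0 := Finsupp.sum_zero_index

lemma Zp_zero : Zp K ι 0 = 0 := Finsupp.sum_zero_index

namespace GA

noncomputable def leftPoly (u : GA K ι) : MvPolynomial (ι ⊕ ι) K := Yp K ι u.1 + u.2

noncomputable def rightPoly (u : GA K ι) : MvPolynomial (ι ⊕ ι) K := Zp K ι u.1 + u.2

lemma fst_mul (u v : GA K ι) : (u * v).1 = 0 := rfl

lemma coe_snd_mul (u v : GA K ι) :
    ((u * v).2 : MvPolynomial (ι ⊕ ι) K) = leftPoly u * rightPoly v := rfl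

lemma leftPoly_mul (u v : GA K ι) : leftPoly (u * v) = leftPoly u * rightPoly v := by
  rw [leftPoly, fst_mul, Yp_zero, zero_add, coe_snd_mul]

lemma rightPoly_mul (u v : GA K ι) : rightPoly (u * v) = leftPoly u * rightPoly v := by
  rw [rightPoly, fst_mul, Zp_zero, zero_add, coe_snd_mul]

lemma mul_eq_mul_of_poly_eq {u v u' v' : GA K ι}
    (h : leftPoly u * rightPoly v = leftPoly u' * rightPoly v') : u * v = u' * v' := by
  refine Prod.ext (by rw [fst_mul, fst_mul]) (Subtype.ext ?_)
  rw [coe_snd_mul, coe_snd_mul, h]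

end GA

end

/-- The algebra `G_d` (with basis `x_1,…,x_d` and `v_{α,β}`, `|α|,|β| > 0`, and the
multiplication above) is bicommutative: it satisfies both
`x₁(x₂x₃) = x₂(x₁x₃)` and `(x₁x₂)x₃ = (x₁x₃)x₂`. -/
theorem Gd_is_bicommutative (d : ℕ) :
    (∀ u v w : GA K (Fin d), u * (v * w) = v * (u * w)) ∧
    (∀ u v w : GA K (Fin d), (u * v) * w = (u * w) * v) := by
  constructor
  · intro u v w
    apply GA.mul_eq_mul_of_poly_eq
    rw [GA.rightPoly_mul, GA.rightPoly_mul, mul_left_comm]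
  · intro u v w
    apply GA.mul_eq_mul_of_poly_eq
    rw [GA.leftPoly_mul, GA.leftPoly_mul, mul_right_comm]
end

section
/- In the algebra G_d defined above, the square G_d² (the span of all products) equals the span of the elements v_{α,β} with |α|, |β| > 0, and G_d² is a commutative and associative subalgebra of G_d. -/
open MvPolynomial

variable (K : Type) [Field K] (ι : Type)

/-! Every product `u ∘ v` has zero linear part and polynomial part `(Y(u₁) + u₂)(Z(v₁) + v₂)`,
so `G²` lies in `0 × V`, where `V = (y_i z_j)` and the product is the multiplication of
polynomials: commutative and associative. Conversely, `V` is a monomial ideal, so as a vector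
space it is spanned by the monomials `Y^α Z^β` with `α, β ≠ 0`, and each of these is
`x_i ∘ x_j`, `x_i ∘ v_{α-ε_i,β}` or `v_{α,β-ε_j} ∘ x_j`. -/

lemma Finsupp.exists_eq_single_add_of_ne_zero {σ : Type*} {α : σ →₀ ℕ} (hα : α ≠ 0) :
    ∃ i α', α = Finsupp.single i 1 + α' := by
  obtain ⟨i, hi⟩ := Finsupp.ne_iff.mp hα
  obtain ⟨α', rfl⟩ := exists_add_of_le
    (Finsupp.single_le_iff.mpr (Nat.one_le_iff_ne_zero.mpr hi) : Finsupp.single i 1 ≤ α)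
  exact ⟨i, α', rfl⟩

open Finsupp in
lemma Finsupp.exists_sumElim_single_single_le_iff {σ τ : Type*} (e : σ ⊕ τ →₀ ℕ) :
    (∃ i j, sumElim (single i 1) (single j 1) ≤ e) ↔
      (∃ i, e (Sum.inl i) ≠ 0) ∧ ∃ j, e (Sum.inr j) ≠ 0 := by
  classical
  simp only [Finsupp.le_def, Sum.forall, sumElim_inl, sumElim_inr, single_apply]
  constructor
  · rintro ⟨i, j, hi, hj⟩
    exact ⟨⟨i, by simpa [Nat.one_le_iff_ne_zero] using hi i⟩,
      ⟨j, by simpa [Nat.one_le_iff_ne_zero] using hj j⟩⟩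
  · rintro ⟨⟨i, hi⟩, ⟨j, hj⟩⟩
    refine ⟨i, j, fun k => ?_, fun k => ?_⟩ <;> split_ifs <;> subst_vars <;> omega

section

variable {R σ τ : Type*} [CommSemiring R]

lemma MvPolynomial.monomial_sumElim_single_add (i : σ) (α : σ →₀ ℕ) (β : τ →₀ ℕ) (c : R) :
    monomial (Finsupp.sumElim (Finsupp.single i 1 + α) β) c
      = X (Sum.inl i) * monomial (Finsupp.sumElim α β) c := by
  conv_lhs => rw [← zero_add β, Finsupp.sumElim_add, Finsupp.sumElim_single_zero,
    monomial_single_add, pow_one]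

lemma MvPolynomial.monomial_sumElim_add_single (j : τ) (α : σ →₀ ℕ) (β : τ →₀ ℕ) (c : R) :
    monomial (Finsupp.sumElim α (β + Finsupp.single j 1)) c
      = monomial (Finsupp.sumElim α β) c * X (Sum.inr j) := by
  conv_lhs => rw [← add_zero α, Finsupp.sumElim_add, Finsupp.sumElim_zero_single,
    monomial_add_single, pow_one]

end

section

variable {K ι}

open Finsupp in
lemma Vid_eq_span_monomial :
    Vid K ι = Ideal.span ((fun e => monomial e (1 : K)) ''
      {e | ∃ i j : ι, e = sumElim (single i 1) (single j 1)}) := by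
  rw [Vid]
  congr 1
  ext p
  simp [X, monomial_mul, eq_comm]

lemma mem_Vid_iff {p : MvPolynomial (ι ⊕ ι) K} :
    p ∈ Vid K ι ↔ ∀ e ∈ p.support, (∃ i, e (Sum.inl i) ≠ 0) ∧ ∃ j, e (Sum.inr j) ≠ 0 := by
  rw [Vid_eq_span_monomial, mem_ideal_span_monomial_image]
  refine forall₂_congr fun e _ => ?_
  simpa using Finsupp.exists_sumElim_single_single_le_iff e

lemma monomial_sumElim_mem_Vid {α β : ι →₀ ℕ} (hα : α ≠ 0) (hβ : β ≠ 0) (c : K) :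
    monomial (Finsupp.sumElim α β) c ∈ Vid K ι := by
  rw [mem_Vid_iff]
  intro e he
  rw [Finset.mem_singleton.mp (support_monomial_subset he)]
  exact ⟨Finsupp.ne_iff.mp hα, Finsupp.ne_iff.mp hβ⟩

def vMonomials : Set (MvPolynomial (ι ⊕ ι) K) :=
  {p | ∃ α β : ι →₀ ℕ, α ≠ 0 ∧ β ≠ 0 ∧ p = monomial (Finsupp.sumElim α β) 1}

lemma restrictScalars_Vid_eq_span_vMonomials :
    (Vid K ι).restrictScalars K = Submodule.span K (vMonomials (K := K) (ι := ι)) := by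
  refine le_antisymm (fun p hp => ?_) (Submodule.span_le.mpr ?_)
  · rw [p.as_sum]
    refine Submodule.sum_mem _ fun e he => ?_
    obtain ⟨⟨i, hi⟩, ⟨j, hj⟩⟩ := mem_Vid_iff.mp hp e he
    rw [← mul_one (coeff e p), ← smul_eq_mul, ← smul_monomial,
      ← Finsupp.comapDomain_sumElim_comapDomain e]
    refine Submodule.smul_mem _ _ (Submodule.subset_span ⟨_, _, ?_, ?_, rfl⟩)
    · exact Finsupp.ne_iff.mpr ⟨i, by simpa using hi⟩
    · exact Finsupp.ne_iff.mpr ⟨j, by simpa using hj⟩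
  · rintro _ ⟨α, β, hα, hβ, rfl⟩
    exact monomial_sumElim_mem_Vid hα hβ 1

lemma Yp_single_one (i : ι) : Yp K ι (Finsupp.single i 1) = X (Sum.inl i) := by
  simp [Yp]

lemma Zp_single_one (j : ι) : Zp K ι (Finsupp.single j 1) = X (Sum.inr j) := by
  simp [Zp]

lemma fst_mul (u v : GA K ι) : (u * v).1 = 0 := rfl

lemma coe_snd_mul (u v : GA K ι) :
    ((u * v).2 : MvPolynomial (ι ⊕ ι) K) = (Yp K ι u.1 + u.2) * (Zp K ι v.1 + v.2) := rfl

-- Comparing first components by `rfl` here would make the kernel unfold polynomial products.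
lemma mul_ext {u v u' v' : GA K ι}
    (h : ((u * v).2 : MvPolynomial (ι ⊕ ι) K) = (u' * v').2) : u * v = u' * v' :=
  Prod.ext ((fst_mul u v).trans (fst_mul u' v').symm) (Subtype.ext h)

lemma coe_snd_mul_of_fst_eq_zero {u v : GA K ι} (hu : u.1 = 0) (hv : v.1 = 0) :
    ((u * v).2 : MvPolynomial (ι ⊕ ι) K) = u.2 * v.2 := by
  rw [coe_snd_mul, hu, hv, Yp_zero, Zp_zero, zero_add, zero_add]

lemma mul_comm_of_fst_eq_zero {u v : GA K ι} (hu : u.1 = 0) (hv : v.1 = 0) : u * v = v * u :=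
  mul_ext <| by
    rw [coe_snd_mul_of_fst_eq_zero hu hv, coe_snd_mul_of_fst_eq_zero hv hu, mul_comm]

lemma mul_assoc_of_fst_eq_zero (u : GA K ι) {v : GA K ι} (hv : v.1 = 0) (w : GA K ι) :
    u * v * w = u * (v * w) :=
  mul_ext <| by
    simp only [coe_snd_mul, fst_mul, hv, Yp_zero, Zp_zero, zero_add, mul_assoc]

lemma Gsq_le_ker_fst : Gsq K ι ≤ LinearMap.ker (LinearMap.fst K (ι →₀ K) (Vid K ι)) :=
  Submodule.span_le.mpr <| by
    rintro _ ⟨u, v, rfl⟩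
    exact fst_mul u v

lemma mem_Gsq_of_coe_snd_eq {w : GA K ι} (hw : w.1 = 0) (u v : GA K ι)
    (h : (w.2 : MvPolynomial (ι ⊕ ι) K) = (Yp K ι u.1 + u.2) * (Zp K ι v.1 + v.2)) :
    w ∈ Gsq K ι :=
  Submodule.subset_span ⟨u, v, Prod.ext hw (Subtype.ext h)⟩

def vElems : Set (GA K ι) := {w | ∃ α β : ι →₀ ℕ, α ≠ 0 ∧ β ≠ 0 ∧ IsVElem K ι w α β}

lemma vElems_subset_Gsq : vElems (K := K) (ι := ι) ⊆ Gsq K ι := by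
  rintro w ⟨α, β, hα, hβ, hw, hwv⟩
  obtain ⟨i, α, rfl⟩ := Finsupp.exists_eq_single_add_of_ne_zero hα
  obtain ⟨j, β, rfl⟩ := Finsupp.exists_eq_single_add_of_ne_zero hβ
  rw [add_comm (Finsupp.single j 1)] at hβ hwv
  by_cases hα0 : α = 0
  · by_cases hβ0 : β = 0
    · refine mem_Gsq_of_coe_snd_eq hw (xE K ι i) (xE K ι j) ?_
      simp [hwv, xE, hα0, hβ0, Yp_single_one, Zp_single_one, X, monomial_mul]
    · refine mem_Gsq_of_coe_snd_eq hw
        (0, ⟨_, monomial_sumElim_mem_Vid hα hβ0 1⟩) (xE K ι j) ?_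
      rw [hwv, monomial_sumElim_add_single]
      simp [xE, Yp_zero, Zp_single_one]
  · refine mem_Gsq_of_coe_snd_eq hw
      (xE K ι i) (0, ⟨_, monomial_sumElim_mem_Vid hα0 hβ 1⟩) ?_
    rw [hwv, monomial_sumElim_single_add]
    simp [xE, Zp_zero, Yp_single_one]

lemma ker_fst_le_span_vElems :
    LinearMap.ker (LinearMap.fst K (ι →₀ K) (Vid K ι)) ≤ Submodule.span K vElems := by
  intro w hw
  let g : GA K ι →ₗ[K] MvPolynomial (ι ⊕ ι) K :=
    (Vid K ι).subtype.restrictScalars K ∘ₗ LinearMap.snd K _ _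
  have hg : (w.2 : MvPolynomial (ι ⊕ ι) K) ∈ (Submodule.span K vElems).map g := by
    rw [Submodule.map_span]
    refine Submodule.span_mono ?_ (restrictScalars_Vid_eq_span_vMonomials.le w.2.2)
    rintro _ ⟨α, β, hα, hβ, rfl⟩
    exact ⟨(0, ⟨_, monomial_sumElim_mem_Vid hα hβ 1⟩), ⟨α, β, hα, hβ, rfl, rfl⟩, rfl⟩
  obtain ⟨s, hs, hgs⟩ := hg
  have hs0 : s.1 = 0 := Gsq_le_ker_fst (Submodule.span_le.mpr vElems_subset_Gsq hs)
  rwa [show s = w from Prod.ext (hs0.trans hw.symm) (Subtype.ext hgs)] at hs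

lemma Gsq_eq_span_vElems : Gsq K ι = Submodule.span K vElems :=
  le_antisymm (Gsq_le_ker_fst.trans ker_fst_le_span_vElems)
    (Submodule.span_le.mpr vElems_subset_Gsq)

end

/-- The square `G_d²` (the span of all products in `G_d`) equals the span of the
basis elements `v_{α,β}` with `|α|, |β| > 0`, and `G_d²` is closed under
multiplication, on which the multiplication is commutative and associative. -/
theorem Gd_sq_span_and_comm_assoc (d : ℕ) :
    Gsq K (Fin d) =
      Submodule.span K {w : GA K (Fin d) |
        ∃ α β : Fin d →₀ ℕ, α ≠ 0 ∧ β ≠ 0 ∧ IsVElem K (Fin d) w α β} ∧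
    (∀ u ∈ Gsq K (Fin d), ∀ v ∈ Gsq K (Fin d), u * v ∈ Gsq K (Fin d)) ∧
    (∀ u ∈ Gsq K (Fin d), ∀ v ∈ Gsq K (Fin d), u * v = v * u) ∧
    (∀ u ∈ Gsq K (Fin d), ∀ v ∈ Gsq K (Fin d), ∀ w ∈ Gsq K (Fin d),
      (u * v) * w = u * (v * w)) := by
  have fst_eq_zero {u : GA K (Fin d)} (hu : u ∈ Gsq K (Fin d)) : u.1 = 0 := Gsq_le_ker_fst hu
  refine ⟨Gsq_eq_span_vElems, fun u _ v _ => Submodule.subset_span ⟨u, v, rfl⟩,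
    fun u hu v hv => mul_comm_of_fst_eq_zero (fst_eq_zero hu) (fst_eq_zero hv),
    fun u _ v hv w _ => mul_assoc_of_fst_eq_zero u (fst_eq_zero hv) w⟩
end

section
/- The free bicommutative algebra on one generator is not left noetherian: in the algebra G_1 with basis {x} ∪ {y^a z^b : a,b ≥ 1} and multiplication x∘x = yz, x∘y^a z^b = y^{a+1} z^b, y^a z^b∘x = y^a z^{b+1}, y^a z^b ∘ y^c z^d = y^{a+c} z^{b+d}, the left ideal generated by the elements { y z^δ : δ = 1, 2, ... } is not finitely generated as a left ideal. -/
open MvPolynomial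

variable (K : Type) [Field K] (ι : Type)

/-- Left ideals of `G`: subspaces `S` with `G ∘ S ⊆ S`. -/
def IsLeftIdeal (S : Submodule K (GA K ι)) : Prop := ∀ (a : GA K ι), ∀ x ∈ S, a * x ∈ S

/-- The left ideal generated by a set: the smallest left ideal containing it. -/
noncomputable def leftIdealGen (T : Set (GA K ι)) : Submodule K (GA K ι) :=
  sInf {S : Submodule K (GA K ι) | IsLeftIdeal K ι S ∧ T ⊆ ↑S}

/-!
In the model, `u ∘ w` is the polynomial `(Y(u₁) + u₂)(Z(w₁) + w₂)`, whose first factor lies in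
`y K[y,z]`; so if `w` has no `x`-part, `u ∘ w` lies in `y² K[y,z]` and has no `y z^N` term. Hence, if
`N` exceeds the degrees of the finitely many elements of `T`, the elements without `x`-part and
without `y z^N` term form a left ideal containing `T` (a left ideal generated by elements without
`x`-part has none), yet it misses the generator `y z^N`.
-/

open Finsupp

section LeftIdeals

variable {K ι}

lemma subset_leftIdealGen (T : Set (GA K ι)) : T ⊆ leftIdealGen K ι T :=
  fun _ ht => Submodule.mem_sInf.mpr fun _ hS => hS.2 ht

lemma leftIdealGen_le {T : Set (GA K ι)} {S : Submodule K (GA K ι)} (hS : IsLeftIdeal K ι S)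
    (hT : T ⊆ S) : leftIdealGen K ι T ≤ S :=
  sInf_le ⟨hS, hT⟩

lemma isLeftIdeal_ker_fst : IsLeftIdeal K ι (LinearMap.ker (LinearMap.fst K _ _)) :=
  fun _ _ _ => rfl

lemma fst_eq_zero_of_mem_leftIdealGen {T : Set (GA K ι)} (hT : ∀ t ∈ T, t.1 = 0) {w : GA K ι}
    (hw : w ∈ leftIdealGen K ι T) : w.1 = 0 :=
  leftIdealGen_le isLeftIdeal_ker_fst hT hw

lemma monomial_mem_Vid {d : ι ⊕ ι →₀ ℕ} {i j : ι} (hi : d (Sum.inl i) ≠ 0)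
    (hj : d (Sum.inr j) ≠ 0) (c : K) : monomial d c ∈ Vid K ι := by
  classical
  set e : ι ⊕ ι →₀ ℕ := single (Sum.inl i) 1 + single (Sum.inr j) 1
  have he : e ≤ d := by
    intro k
    simp only [e, Finsupp.coe_add, Pi.add_apply, single_apply]
    split_ifs <;> subst_vars <;> simp_all [Nat.one_le_iff_ne_zero]
  have hsplit : monomial d c = monomial (d - e) c * (X (Sum.inl i) * X (Sum.inr j)) := by
    rw [X, X, monomial_mul, monomial_mul, one_mul, mul_one, tsub_add_cancel_of_le he]
  rw [hsplit]
  exact Ideal.mul_mem_left _ _ (Ideal.subset_span ⟨i, j, rfl⟩)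

end LeftIdeals

lemma coeff_mul_eq_zero_of_mem_span_X {σ R : Type*} [CommSemiring R] (i : σ)
    {p q : MvPolynomial σ R} (hp : p ∈ Ideal.span {X i}) (hq : q ∈ Ideal.span {X i})
    {m : σ →₀ ℕ} (hm : m i ≤ 1) : coeff m (p * q) = 0 := by
  classical
  obtain ⟨r, rfl⟩ := Ideal.mem_span_singleton.mp hp
  obtain ⟨s, rfl⟩ := Ideal.mem_span_singleton.mp hq
  rw [show X i * r * (X i * s) = X i * (X i * (r * s)) by ring, coeff_X_mul']
  split_ifs with hmi
  · rw [coeff_X_mul', if_neg]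
    simp only [Finsupp.mem_support_iff, tsub_apply, single_eq_same]
    omega
  · rfl

namespace G1

variable {K}

local notation "y" => (X (Sum.inl 0) : MvPolynomial (Fin 1 ⊕ Fin 1) K)

lemma Vid_le_span_X_inl : Vid K (Fin 1) ≤ Ideal.span {y} :=
  Ideal.span_le.mpr fun _ ⟨i, j, h⟩ => by
    rw [h, Subsingleton.elim i 0]
    exact Ideal.mul_mem_right _ _ (Ideal.mem_span_singleton_self _)

lemma Yp_mem_span_X_inl (a : Fin 1 →₀ K) : Yp K (Fin 1) a ∈ Ideal.span {y} :=
  Submodule.sum_mem _ fun i _ => by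
    rw [Subsingleton.elim i 0]
    exact Ideal.mul_mem_left _ _ (Ideal.mem_span_singleton_self _)

noncomputable def coeffKer (d : Fin 1 ⊕ Fin 1 →₀ ℕ) : Submodule K (GA K (Fin 1)) where
  carrier := {w | w.1 = 0 ∧ coeff d (w.2 : MvPolynomial (Fin 1 ⊕ Fin 1) K) = 0}
  add_mem' := by
    rintro a b ⟨ha₁, ha₂⟩ ⟨hb₁, hb₂⟩
    simp [ha₁, hb₁, ha₂, hb₂]
  zero_mem' := by simp
  smul_mem' := by
    rintro c a ⟨ha₁, ha₂⟩
    simp [ha₁, ha₂]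

lemma isLeftIdeal_coeffKer {d : Fin 1 ⊕ Fin 1 →₀ ℕ} (hd : d (Sum.inl 0) ≤ 1) :
    IsLeftIdeal K (Fin 1) (coeffKer d) := by
  rintro u w ⟨hw, -⟩
  refine ⟨rfl, coeff_mul_eq_zero_of_mem_span_X _ ?_ ?_ hd⟩
  · exact add_mem (Yp_mem_span_X_inl u.1) (Vid_le_span_X_inl u.2.2)
  · rw [hw, Zp, sum_zero_index, zero_add]
    exact Vid_le_span_X_inl w.2.2

end G1

/-- The one-generated free bicommutative algebra `G_1` is not left noetherian: the
left ideal of `G_1` generated by the elements `y z^δ`, `δ = 1, 2, …`, is not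
finitely generated as a left ideal. -/
theorem G1_left_ideal_not_finitely_generated :
    ¬ ∃ T : Finset (GA K (Fin 1)),
        leftIdealGen K (Fin 1) ↑T =
        leftIdealGen K (Fin 1)
          {w : GA K (Fin 1) | ∃ δ : ℕ, 1 ≤ δ ∧
            IsVElem K (Fin 1) w (Finsupp.single 0 1) (Finsupp.single 0 δ)} := by
  rintro ⟨T, hT⟩
  set N := 1 + T.sup fun t => (t.2 : MvPolynomial (Fin 1 ⊕ Fin 1) K).totalDegree
  set d : Fin 1 ⊕ Fin 1 →₀ ℕ := sumElim (single 0 1) (single 0 N)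
  have hd : d = single (Sum.inl 0) 1 + single (Sum.inr 0) N := sumElim_single_single ..
  have hyzN : monomial d (1 : K) ∈ Vid K (Fin 1) :=
    monomial_mem_Vid (i := 0) (j := 0) (by simp [d]) (by simp [d, N]) 1
  have hgen : ((0 : Fin 1 →₀ K), ⟨monomial d 1, hyzN⟩) ∈ leftIdealGen K (Fin 1)
      {w | ∃ δ : ℕ, 1 ≤ δ ∧ IsVElem K (Fin 1) w (single 0 1) (single 0 δ)} :=
    subset_leftIdealGen _ ⟨N, by omega, rfl, rfl⟩
  have hTker : leftIdealGen K (Fin 1) ↑T ≤ G1.coeffKer d := by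
    refine leftIdealGen_le (G1.isLeftIdeal_coeffKer (by simp [d])) fun t ht => ⟨?_, ?_⟩
    · refine fst_eq_zero_of_mem_leftIdealGen ?_ (hT ▸ subset_leftIdealGen _ ht)
      exact fun _ ⟨_, _, h, _⟩ => h
    · refine coeff_eq_zero_of_totalDegree_lt ?_
      rw [← degree_apply, hd, map_add, degree_single, degree_single]
      have hdeg := Finset.le_sup (f := fun t : GA K (Fin 1) =>
        (t.2 : MvPolynomial (Fin 1 ⊕ Fin 1) K).totalDegree) ht
      omega
  have hcoeff : coeff d (monomial d (1 : K)) = 0 := (hTker (hT ▸ hgen)).2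
  simp [coeff_monomial] at hcoeff
end

section
/- Every finitely generated bicommutative algebra satisfies the ascending chain condition on two-sided ideals. -/
open Submodule

/-!
Let `A²` be the span of all products. By bicommutativity the multiplications `x ↦ a * x` and
`x ↦ x * a`, restricted to `A²`, commute pairwise, and they lie in the algebra generated by those
of the finitely many generators `s`. That algebra is therefore a commutative, finitely generated
`K`-algebra, hence noetherian, and `A²` is a finitely generated module over it (by the products
`s * t` of generators) whose submodules include `I ⊓ A²` for every two-sided ideal `I`. So the
chain `I n ⊓ A²` stabilizes. As `A / A²` is spanned by the generators, `I n ⊔ A²` stabilizes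
too, and modularity of the lattice of submodules forces `I n` itself to stabilize.
-/

open scoped IsMulCommutative in
theorem Algebra.isNoetherianRing_adjoin_of_commute {K E : Type*} [CommRing K] [IsNoetherianRing K]
    [Ring E] [Algebra K E] {s : Set E} (hs : s.Finite)
    (hcomm : ∀ x ∈ s, ∀ y ∈ s, x * y = y * x) : IsNoetherianRing (Algebra.adjoin K s) := by
  have := isMulCommutative_adjoin K hcomm
  have : Algebra.FiniteType K (Algebra.adjoin K s) :=
    (Subalgebra.fg_iff_finiteType _).mp ⟨hs.toFinset, by rw [hs.coe_toFinset]⟩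
  exact Algebra.FiniteType.isNoetherianRing K (Algebra.adjoin K s)

theorem Monotone.exists_eq_of_inf_of_sup {α : Type*} [Lattice α] [IsModularLattice α]
    {f : ℕ → α} (hf : Monotone f) (c : α) (hinf : ∃ N, ∀ n, N ≤ n → f n ⊓ c = f N ⊓ c)
    (hsup : ∃ N, ∀ n, N ≤ n → f n ⊔ c = f N ⊔ c) : ∃ N, ∀ n, N ≤ n → f n = f N := by
  obtain ⟨N₁, hN₁⟩ := hinf
  obtain ⟨N₂, hN₂⟩ := hsup
  refine ⟨max N₁ N₂, fun n hn ↦ (eq_of_le_of_inf_le_of_sup_le (z := c) (hf hn) ?_ ?_).symm⟩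
  · rw [hN₁ n (le_of_max_le_left hn), hN₁ _ (le_max_left _ _)]
  · rw [hN₂ n (le_of_max_le_right hn), hN₂ _ (le_max_right _ _)]

theorem Submodule.exists_sup_eq_of_isNoetherian_quotient {R M : Type*} [Ring R] [AddCommGroup M]
    [Module R M] (P : Submodule R M) [IsNoetherian R (M ⧸ P)] {I : ℕ → Submodule R M}
    (hI : Monotone I) : ∃ N, ∀ n, N ≤ n → I n ⊔ P = I N ⊔ P := by
  obtain ⟨N, hN⟩ := monotone_stabilizes_iff_noetherian.mpr inferInstance
    ⟨fun n ↦ (I n).map P.mkQ, fun _ _ h ↦ map_mono (hI h)⟩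
  refine ⟨N, fun n hn ↦ ?_⟩
  have : comap P.mkQ ((I N).map P.mkQ) = comap P.mkQ ((I n).map P.mkQ) :=
    congrArg (comap P.mkQ) (hN n hn)
  rwa [comap_map_mkQ, comap_map_mkQ, sup_comm, sup_comm _ (I n), eq_comm] at this

class IsBicommutative (A : Type*) [Mul A] : Prop where
  mul_left_comm : ∀ a b c : A, a * (b * c) = b * (a * c)
  mul_right_comm : ∀ a b c : A, a * b * c = a * c * b

namespace IsBicommutative

theorem mul_assoc_mul_middle {A : Type*} [Mul A] [IsBicommutative A] (a b c d : A) :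
    a * (b * c * d) = a * (b * c) * d :=
  calc a * (b * c * d) = a * (b * d * c) := by rw [mul_right_comm b c d]
    _ = b * d * (a * c) := mul_left_comm a (b * d) c
    _ = b * (a * c) * d := (mul_right_comm b (a * c) d).symm
    _ = a * (b * c) * d := by rw [mul_left_comm a b c]

/-- Induct on `b` for `a ∈ S`, then on `a`: `s (b₁ b₂) = b₁ (s b₂)` and `(a₁ a₂) b = (a₁ b) a₂`. -/
theorem mul_mem_of_adjoin_eq_top {K A : Type*} [CommRing K] [NonUnitalNonAssocRing A]
    [Module K A] [IsScalarTower K A A] [SMulCommClass K A A] [IsBicommutative A] {S : Set A}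
    (hS : NonUnitalAlgebra.adjoin K S = ⊤) {P : Submodule K A}
    (hP : ∀ a : A, ∀ x ∈ P, a * x ∈ P ∧ x * a ∈ P) (hSS : ∀ s ∈ S, ∀ t ∈ S, s * t ∈ P)
    (a b : A) : a * b ∈ P := by
  have mem_adjoin (x : A) : x ∈ NonUnitalAlgebra.adjoin K S := hS ▸ trivial
  have generator_mul (s : A) (hs : s ∈ S) (b : A) : s * b ∈ P := by
    induction mem_adjoin b using NonUnitalAlgebra.adjoin_induction with
    | mem t ht => exact hSS s hs t ht
    | add x y _ _ hx hy => rw [mul_add]; exact P.add_mem hx hy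
    | zero => rw [mul_zero]; exact P.zero_mem
    | mul x y _ _ _ hy => rw [mul_left_comm]; exact (hP x _ hy).1
    | smul c x _ hx => rw [mul_smul_comm]; exact P.smul_mem c hx
  induction mem_adjoin a using NonUnitalAlgebra.adjoin_induction generalizing b with
  | mem s hs => exact generator_mul s hs b
  | add x y _ _ hx hy => rw [add_mul]; exact P.add_mem (hx b) (hy b)
  | zero => rw [zero_mul]; exact P.zero_mem
  | mul x y _ _ hx _ => rw [mul_right_comm]; exact (hP y _ (hx b)).2
  | smul c x _ hx => rw [smul_mul_assoc]; exact P.smul_mem c (hx b)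

end IsBicommutative

section ProductSpan

variable {K A : Type*} [CommRing K] [NonUnitalNonAssocRing A] [Module K A]

variable (K A) in
def productSpan : Submodule K A := span K {x | ∃ a b : A, a * b = x}

theorem mul_mem_productSpan (a b : A) : a * b ∈ productSpan K A := subset_span ⟨a, b, rfl⟩

variable [IsScalarTower K A A] [SMulCommClass K A A]

theorem IsBicommutative.mul_assoc_of_mem_productSpan [IsBicommutative A] {x : A}
    (hx : x ∈ productSpan K A) (a b : A) : a * (x * b) = a * x * b := by
  induction hx using span_induction with
  | mem x hx => obtain ⟨c, d, rfl⟩ := hx; exact IsBicommutative.mul_assoc_mul_middle a c d b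
  | zero => simp
  | add x y _ _ hx hy => simp only [add_mul, mul_add, hx, hy]
  | smul c x _ hx => simp only [smul_mul_assoc, mul_smul_comm, hx]

variable (K A) in
def mulLeftOnProducts : A →ₗ[K] Module.End K (productSpan K A) :=
  LinearMap.mk₂ K (fun a x ↦ ⟨a * x, mul_mem_productSpan a x⟩)
    (fun _ _ _ ↦ Subtype.ext (add_mul _ _ _)) (fun _ _ _ ↦ Subtype.ext (smul_mul_assoc _ _ _))
    (fun _ _ _ ↦ Subtype.ext (mul_add _ _ _)) (fun _ _ _ ↦ Subtype.ext (mul_smul_comm _ _ _))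

variable (K A) in
def mulRightOnProducts : A →ₗ[K] Module.End K (productSpan K A) :=
  LinearMap.mk₂ K (fun a x ↦ ⟨x * a, mul_mem_productSpan (x : A) a⟩)
    (fun _ _ _ ↦ Subtype.ext (mul_add _ _ _)) (fun _ _ _ ↦ Subtype.ext (mul_smul_comm _ _ _))
    (fun _ _ _ ↦ Subtype.ext (add_mul _ _ _)) (fun _ _ _ ↦ Subtype.ext (smul_mul_assoc _ _ _))

theorem sup_productSpan_eq_top {S : Set A} (hS : NonUnitalAlgebra.adjoin K S = ⊤) :
    productSpan K A ⊔ span K S = ⊤ := by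
  refine eq_top_iff'.mpr fun a ↦ ?_
  have mem_adjoin : a ∈ NonUnitalAlgebra.adjoin K S := hS ▸ trivial
  induction mem_adjoin using NonUnitalAlgebra.adjoin_induction with
  | mem s hs => exact mem_sup_right (subset_span hs)
  | add x y _ _ hx hy => exact add_mem hx hy
  | zero => exact zero_mem _
  | mul x y _ _ _ _ => exact mem_sup_left (mul_mem_productSpan x y)
  | smul c x _ hx => exact smul_mem _ c hx

theorem finite_quotient_productSpan {S : Set A} (hfin : S.Finite)
    (hS : NonUnitalAlgebra.adjoin K S = ⊤) : Module.Finite K (A ⧸ productSpan K A) := by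
  refine ⟨?_⟩
  rw [← (map_mkQ_eq_top _ _).mpr (sup_productSpan_eq_top hS)]
  exact (fg_span hfin).map _

variable [IsBicommutative A]

theorem mulLeftOnProducts_mul (a b : A) :
    mulLeftOnProducts K A (a * b) = mulRightOnProducts K A b * mulLeftOnProducts K A a :=
  LinearMap.ext fun x ↦ Subtype.ext (IsBicommutative.mul_right_comm a b x)

theorem mulRightOnProducts_mul (a b : A) :
    mulRightOnProducts K A (a * b) = mulLeftOnProducts K A a * mulRightOnProducts K A b :=
  LinearMap.ext fun x ↦ Subtype.ext (IsBicommutative.mul_left_comm (x : A) a b)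

theorem commute_mulLeftOnProducts (a b : A) :
    Commute (mulLeftOnProducts K A a) (mulLeftOnProducts K A b) :=
  LinearMap.ext fun x ↦ Subtype.ext (IsBicommutative.mul_left_comm a b x)

theorem commute_mulRightOnProducts (a b : A) :
    Commute (mulRightOnProducts K A a) (mulRightOnProducts K A b) :=
  LinearMap.ext fun x ↦ Subtype.ext (IsBicommutative.mul_right_comm (x : A) b a)

theorem commute_mulLeftOnProducts_mulRightOnProducts (a b : A) :
    Commute (mulLeftOnProducts K A a) (mulRightOnProducts K A b) :=
  LinearMap.ext fun x ↦ Subtype.ext (IsBicommutative.mul_assoc_of_mem_productSpan x.2 a b)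

end ProductSpan

section ProductMulAlgebra

variable {K A : Type*} [CommRing K] [NonUnitalNonAssocRing A] [Module K A]
  [IsScalarTower K A A] [SMulCommClass K A A]

variable (K) in
def productMulAlgebra (S : Set A) : Subalgebra K (Module.End K (productSpan K A)) :=
  Algebra.adjoin K (mulLeftOnProducts K A '' S ∪ mulRightOnProducts K A '' S)

theorem apply_mem_of_mem_productMulAlgebra {S : Set A} {P : Submodule K A}
    (hP : ∀ a : A, ∀ x ∈ P, a * x ∈ P ∧ x * a ∈ P) {f : Module.End K (productSpan K A)}
    (hf : f ∈ productMulAlgebra K S) {x : productSpan K A} (hx : (x : A) ∈ P) :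
    (f x : A) ∈ P := by
  induction hf using Algebra.adjoin_induction generalizing x with
  | mem f hf =>
    rcases hf with ⟨a, -, rfl⟩ | ⟨a, -, rfl⟩
    exacts [(hP a x hx).1, (hP a x hx).2]
  | algebraMap c => exact P.smul_mem c hx
  | add f g _ _ hf hg => exact P.add_mem (hf hx) (hg hx)
  | mul f g _ _ hf hg => exact hf (hg hx)

variable [IsBicommutative A]

theorem mulLeftOnProducts_mem_and_mulRightOnProducts_mem {S : Set A} (hS : NonUnitalAlgebra.adjoin K S = ⊤)
    (a : A) : mulLeftOnProducts K A a ∈ productMulAlgebra K S ∧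
      mulRightOnProducts K A a ∈ productMulAlgebra K S := by
  have mem_adjoin : a ∈ NonUnitalAlgebra.adjoin K S := hS ▸ trivial
  induction mem_adjoin using NonUnitalAlgebra.adjoin_induction with
  | mem s hs =>
    exact ⟨Algebra.subset_adjoin (.inl ⟨s, hs, rfl⟩), Algebra.subset_adjoin (.inr ⟨s, hs, rfl⟩)⟩
  | add x y _ _ hx hy => simpa only [map_add] using ⟨add_mem hx.1 hy.1, add_mem hx.2 hy.2⟩
  | zero => simpa only [map_zero] using ⟨zero_mem _, zero_mem _⟩
  | mul x y _ _ hx hy =>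
    rw [mulLeftOnProducts_mul, mulRightOnProducts_mul]
    exact ⟨mul_mem hy.2 hx.1, mul_mem hx.1 hy.2⟩
  | smul c x _ hx =>
    simpa only [map_smul] using ⟨Subalgebra.smul_mem _ hx.1 c, Subalgebra.smul_mem _ hx.2 c⟩

theorem isNoetherianRing_productMulAlgebra [IsNoetherianRing K] {S : Set A} (hS : S.Finite) :
    IsNoetherianRing (productMulAlgebra K S) := by
  refine Algebra.isNoetherianRing_adjoin_of_commute ((hS.image _).union (hS.image _)) ?_
  rintro _ (⟨a, -, rfl⟩ | ⟨a, -, rfl⟩) _ (⟨b, -, rfl⟩ | ⟨b, -, rfl⟩)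
  · exact commute_mulLeftOnProducts a b
  · exact commute_mulLeftOnProducts_mulRightOnProducts a b
  · exact (commute_mulLeftOnProducts_mulRightOnProducts b a).symm
  · exact commute_mulRightOnProducts a b

theorem span_productMulAlgebra_eq_top {S : Set A} (hS : NonUnitalAlgebra.adjoin K S = ⊤) :
    span (productMulAlgebra K S)
      (Set.image2 (fun s t ↦ (⟨s * t, mul_mem_productSpan s t⟩ : productSpan K A)) S S) = ⊤ := by
  set N := span (productMulAlgebra K S)
    (Set.image2 (fun s t ↦ (⟨s * t, mul_mem_productSpan s t⟩ : productSpan K A)) S S)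
  set P : Submodule K A := (N.restrictScalars K).map (productSpan K A).subtype
  have hP : ∀ a : A, ∀ x ∈ P, a * x ∈ P ∧ x * a ∈ P := by
    rintro a _ ⟨x, hx, rfl⟩
    obtain ⟨hL, hR⟩ := mulLeftOnProducts_mem_and_mulRightOnProducts_mem hS a
    exact ⟨⟨_, N.smul_mem ⟨_, hL⟩ hx, rfl⟩, ⟨_, N.smul_mem ⟨_, hR⟩ hx, rfl⟩⟩
  have hle : productSpan K A ≤ P :=
    span_le.mpr <| by
      rintro _ ⟨a, b, rfl⟩
      exact IsBicommutative.mul_mem_of_adjoin_eq_top hS hP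
        (fun s hs t ht ↦ ⟨_, subset_span ⟨s, hs, t, ht, rfl⟩, rfl⟩) a b
  refine eq_top_iff.mpr fun x _ ↦ ?_
  obtain ⟨y, hy, hyx⟩ := hle x.2
  exact Subtype.ext hyx ▸ hy

theorem exists_inf_productSpan_eq [IsNoetherianRing K] {S : Set A} (hfin : S.Finite)
    (hS : NonUnitalAlgebra.adjoin K S = ⊤) {I : ℕ → Submodule K A}
    (hI : ∀ n, ∀ a : A, ∀ x ∈ I n, a * x ∈ I n ∧ x * a ∈ I n) (hmono : Monotone I) :
    ∃ N, ∀ n, N ≤ n → I n ⊓ productSpan K A = I N ⊓ productSpan K A := by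
  have := isNoetherianRing_productMulAlgebra (K := K) hfin
  have : Module.Finite (productMulAlgebra K S) (productSpan K A) :=
    ⟨⟨(hfin.image2 _ hfin).toFinset, by simpa using span_productMulAlgebra_eq_top hS⟩⟩
  let J : ℕ →o Submodule (productMulAlgebra K S) (productSpan K A) :=
    { toFun n :=
        { toAddSubmonoid := ((I n).comap (productSpan K A).subtype).toAddSubmonoid
          smul_mem' f _ hx := apply_mem_of_mem_productMulAlgebra (hI n) f.2 hx }
      monotone' _ _ h _ hx := hmono h hx }
  obtain ⟨N, hN⟩ := monotone_stabilizes_iff_noetherian.mpr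
    (isNoetherian_of_isNoetherianRing_of_finite (productMulAlgebra K S) (productSpan K A)) J
  refine ⟨N, fun n hn ↦ ?_⟩
  have : ((J N).restrictScalars K).map (productSpan K A).subtype =
      ((J n).restrictScalars K).map (productSpan K A).subtype := by rw [hN n hn]
  rwa [inf_comm, inf_comm (I N), ← map_comap_subtype, ← map_comap_subtype, eq_comm]

end ProductMulAlgebra

/-- Every finitely generated bicommutative algebra over a field is weakly
noetherian: it satisfies the ascending chain condition on two-sided ideals. -/
theorem finitely_generated_bicommutative_acc_two_sided_ideals
    {K : Type*} [Field K] {A : Type*} [NonUnitalNonAssocRing A] [Module K A]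
    [IsScalarTower K A A] [SMulCommClass K A A]
    (hlc : ∀ x₁ x₂ x₃ : A, x₁ * (x₂ * x₃) = x₂ * (x₁ * x₃))
    (hrc : ∀ x₁ x₂ x₃ : A, (x₁ * x₂) * x₃ = (x₁ * x₃) * x₂)
    (hfg : ∃ S : Finset A, NonUnitalAlgebra.adjoin K (↑S : Set A) = ⊤) :
    ∀ I : ℕ → Submodule K A,
      (∀ n, ∀ (a : A), ∀ x ∈ I n, a * x ∈ I n ∧ x * a ∈ I n) → Monotone I →
      ∃ N, ∀ n, N ≤ n → I n = I N := by
  intro I hI hmono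
  obtain ⟨S, hS⟩ := hfg
  have : IsBicommutative A := ⟨hlc, hrc⟩
  have := finite_quotient_productSpan S.finite_toSet hS
  exact hmono.exists_eq_of_inf_of_sup (productSpan K A)
    (exists_inf_productSpan_eq S.finite_toSet hS hI hmono)
    ((productSpan K A).exists_sup_eq_of_isNoetherian_quotient hmono)
end

section
/- The quasi-order ≼ on [Y,Z] from the previous statement is isomorphic (as a quasi-ordered set) to the Higman sequence order on finite sequences over ℕ×ℕ: identifying y_1^{α_1}···y_m^{α_m} z_1^{β_1}···z_m^{β_m} with the sequence ((α_1,β_1),...,(α_m,β_m)), one has Y^α Z^β ≼ Y^γ Z^δ iff the corresponding sequence of pairs embeds into the other via a strictly increasing index map with componentwise domination. -/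
/-- A monomial `Y^α Z^β` in the commuting variables `y_1, y_2, …, z_1, z_2, …` is
encoded by its pair of (finitely supported) exponent vectors `(α, β)`. -/
abbrev YZMonomial : Type := (ℕ →₀ ℕ) × (ℕ →₀ ℕ)

/-- `Y^α Z^β ≼ Y^γ Z^δ` iff for some strictly increasing `φ : ℕ → ℕ` the renamed
monomial `∏ y_{φ(i)}^{α_i} z_{φ(i)}^{β_i}` divides `Y^γ Z^δ`. -/
def MonomialPrec (u v : YZMonomial) : Prop :=
  ∃ φ : ℕ → ℕ, StrictMono φ ∧ ∀ i, u.1 i ≤ v.1 (φ i) ∧ u.2 i ≤ v.2 (φ i)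

/-- The length of the finite sequence of pairs
`((α_1,β_1), …, (α_m,β_m))` associated with the monomial `Y^α Z^β`, padding the
two exponent vectors with zeros so that they have the same length `m`. -/
def monLen (u : YZMonomial) : ℕ := (u.1.support ∪ u.2.support).sup id + 1

/-!
Both orders compare the same exponent pairs `(α_i, β_i)`; the only difference is that
`≼` lets `φ` range over all of `ℕ` while the Higman order confines it to the padded
lengths. Beyond `monLen` all exponents vanish, so any strictly increasing
`Fin (monLen u) → Fin (monLen v)` extends to `ℕ`. Conversely, for `u ≠ 0` the last index
`monLen u - 1` carries a nonzero exponent, which forces its image (and by monotonicity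
all earlier images) below `monLen v`.
-/

lemma Fin.exists_strictMono_extend {m n : ℕ} {ψ : Fin m → Fin n} (hψ : StrictMono ψ) :
    ∃ φ : ℕ → ℕ, StrictMono φ ∧ ∀ i : Fin m, φ i = ψ i := by
  refine ⟨fun i => if hi : i < m then ψ ⟨i, hi⟩ else n + i, fun i j hij => ?_,
    fun i => by simp⟩
  dsimp only
  split_ifs with hi hj hj
  · exact hψ hij
  · have := (ψ ⟨i, hi⟩).2
    omega
  · omega
  · omega

lemma monLen_zero : monLen 0 = 1 := by
  simp [monLen]

lemma monLen_pos (u : YZMonomial) : 0 < monLen u :=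
  Nat.succ_pos _

lemma lt_monLen_of_mem {u : YZMonomial} {i : ℕ} (hi : i ∈ u.1.support ∪ u.2.support) :
    i < monLen u :=
  Nat.lt_succ_of_le (Finset.le_sup (f := id) hi)

lemma apply_eq_zero_of_monLen_le {u : YZMonomial} {i : ℕ} (hi : monLen u ≤ i) :
    u.1 i = 0 ∧ u.2 i = 0 := by
  simpa [not_or] using mt lt_monLen_of_mem hi.not_gt

lemma monLen_sub_one_mem {u : YZMonomial} (hu : u ≠ 0) :
    monLen u - 1 ∈ u.1.support ∪ u.2.support := by
  have hne : (u.1.support ∪ u.2.support).Nonempty := by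
    rw [Finset.nonempty_iff_ne_empty, Ne, Finset.union_eq_empty, Finsupp.support_eq_empty,
      Finsupp.support_eq_empty, ← Prod.mk_eq_zero]
    exact hu
  obtain ⟨k, hk, hsup⟩ := Finset.exists_mem_eq_sup _ hne id
  simpa [monLen, hsup] using hk

lemma mem_support_of_le {u v : YZMonomial} {i j : ℕ}
    (hle : u.1 i ≤ v.1 j ∧ u.2 i ≤ v.2 j) (hi : i ∈ u.1.support ∪ u.2.support) :
    j ∈ v.1.support ∪ v.2.support := by
  simp only [Finset.mem_union, Finsupp.mem_support_iff] at hi ⊢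
  omega

lemma apply_lt_monLen {u v : YZMonomial} {φ : ℕ → ℕ} (hφ : Monotone φ)
    (hle : ∀ i, u.1 i ≤ v.1 (φ i) ∧ u.2 i ≤ v.2 (φ i)) (hu : u ≠ 0) {i : ℕ}
    (hi : i < monLen u) : φ i < monLen v :=
  calc φ i ≤ φ (monLen u - 1) := hφ (by omega)
    _ < monLen v := lt_monLen_of_mem (mem_support_of_le (hle _) (monLen_sub_one_mem hu))

/-- The quasi-order `≼` on monomials is isomorphic to the Higman sequence order on
finite sequences over `ℕ × ℕ`: identifying `Y^α Z^β` (with its exponent vectors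
padded to a common length `m`) with the sequence `((α_1,β_1), …, (α_m,β_m))`, one
has `Y^α Z^β ≼ Y^γ Z^δ` iff the corresponding sequence of pairs embeds into the
other one via a strictly increasing index map with componentwise domination. -/
theorem monomialPrec_iff_higman_embedding (u v : YZMonomial) :
    MonomialPrec u v ↔
      ∃ φ : Fin (monLen u) → Fin (monLen v), StrictMono φ ∧
        ∀ i : Fin (monLen u),
          u.1 (i : ℕ) ≤ v.1 ((φ i : ℕ)) ∧ u.2 (i : ℕ) ≤ v.2 ((φ i : ℕ)) := by
  constructor
  · rintro ⟨φ, hφ, hle⟩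
    rcases eq_or_ne u 0 with rfl | hu
    · have hlen : monLen 0 ≤ monLen v := monLen_zero ▸ monLen_pos v
      exact ⟨Fin.castLE hlen, Fin.strictMono_castLE hlen, fun _ => by simp⟩
    · exact ⟨fun i => ⟨φ i, apply_lt_monLen hφ.monotone hle hu i.2⟩, fun i j hij => hφ hij,
        fun i => hle i⟩
  · rintro ⟨ψ, hψ, hle⟩
    obtain ⟨φ, hφ, hφψ⟩ := Fin.exists_strictMono_extend hψ
    refine ⟨φ, hφ, fun i => ?_⟩
    by_cases hi : i < monLen u
    · simpa only [hφψ ⟨i, hi⟩] using hle ⟨i, hi⟩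
    · obtain ⟨h₁, h₂⟩ := apply_eq_zero_of_monLen_le (not_lt.1 hi)
      simp [h₁, h₂]
end
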